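/- Let 𝒯 = (T, σ, 1) be a directed tile assembly system with unique terminal assembly α. Let P be a path without redundancy and v ∈ ℤ² a vector such that both P and P + v are bi-pumpable paths in P[α]. If bipump(P) and bipump(P) + v intersect, then v = ℓ·(pos(P_{|P|−1}) − pos(P₀)) for some ℓ ∈ ℤ, and bipump(P) = bipump(P) + v. -/

import Mathlib

/-! ## The abstract tile assembly model at temperature 1 -/

structure Glue where
  label : ℕ
  strength : ℕ
deriving DecidableEq

instance : Inhabited Glue := ⟨⟨0, 0⟩⟩

/-- A tile type: a unit square with a glue on each of its four sides. -/
structure TileType where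
  north : Glue
  east : Glue
  south : Glue
  west : Glue
deriving DecidableEq

instance : Inhabited TileType := ⟨⟨default, default, default, default⟩⟩

/-- Positions of the discrete plane `ℤ²`. -/
abbrev Pos : Type := ℤ × ℤ

/-- A tile is a position together with a tile type. -/
abbrev Tile : Type := Pos × TileType

/-- Two equal glues bind iff their common strength is at least 1. -/
def glueBind (g g' : Glue) : Prop := g = g' ∧ 1 ≤ g.strength

/-- Two tiles interact (bind) if they are at adjacent positions and the glues on
their abutting sides are equal with strength at least 1. -/
def interact (a b : Tile) : Prop :=
  (b.1 = (a.1.1, a.1.2 + 1) ∧ glueBind a.2.north b.2.south) ∨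
  (b.1 = (a.1.1 + 1, a.1.2) ∧ glueBind a.2.east b.2.west) ∨
  (b.1 = (a.1.1, a.1.2 - 1) ∧ glueBind a.2.south b.2.north) ∨
  (b.1 = (a.1.1 - 1, a.1.2) ∧ glueBind a.2.west b.2.east)

/-- An assembly: a partial function from `ℤ²` to tile types. -/
abbrev Assembly : Type := Pos → Option TileType

/-- The domain of an assembly. -/
def adom (α : Assembly) : Set Pos := {p | α p ≠ none}

/-- Translation of an assembly by a vector: `(α + v)(x) = α (x - v)`. -/
def translateA (α : Assembly) (v : Pos) : Assembly := fun p => α (p - v)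

/-- Adjacency in `ℤ²`. -/
def adjacent (p q : Pos) : Prop := (p.1 - q.1).natAbs + (p.2 - q.2).natAbs = 1

/-- The domain of the assembly is a connected subset of `ℤ²`. -/
def ConnectedDom (α : Assembly) : Prop :=
  ∀ p q, p ∈ adom α → q ∈ adom α →
    Relation.ReflTransGen (fun a b => a ∈ adom α ∧ b ∈ adom α ∧ adjacent a b) p q

/-- Two occupied positions of an assembly are bound. -/
def bindsIn (α : Assembly) (p q : Pos) : Prop :=
  ∃ t t', α p = some t ∧ α q = some t' ∧ interact (p, t) (q, t')

/-- Stability at temperature 1: the binding graph is connected (every cut has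
weight at least 1). -/
def StableA (α : Assembly) : Prop :=
  ConnectedDom α ∧ ∀ p q, p ∈ adom α → q ∈ adom α → Relation.ReflTransGen (bindsIn α) p q

/-- `β` is obtained from `α` by the stable binding of a single tile of type from `T`. -/
def Attaches (T : Finset TileType) (α β : Assembly) : Prop :=
  ∃ p t, t ∈ T ∧ α p = none ∧ β p = some t ∧ (∀ q, q ≠ p → β q = α q) ∧
    ∃ q t', α q = some t' ∧ interact (p, t) (q, t')

/-- `α` is producible from the seed `σ`: it is the union of a (possibly infinite)
sequence of single-tile additions starting from `σ`. -/
def Producible (T : Finset TileType) (σ α : Assembly) : Prop :=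
  ∃ f : ℕ → Assembly, f 0 = σ ∧
    (∀ n, f (n + 1) = f n ∨ Attaches T (f n) (f (n + 1))) ∧
    (∀ p t, α p = some t ↔ ∃ n, f n p = some t)

/-- `α` is a terminal assembly of the system `(T, σ, 1)`. -/
def Terminal (T : Finset TileType) (σ α : Assembly) : Prop :=
  Producible T σ α ∧ ∀ β, ¬ Attaches T α β

/-- The seed is an assembly over `T` which is stable at temperature 1. -/
def SeedOk (T : Finset TileType) (σ : Assembly) : Prop :=
  (∀ p t, σ p = some t → t ∈ T) ∧ StableA σ

/-- `α` is `v`-periodic. -/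
def PeriodicA (α : Assembly) (v : Pos) : Prop := v ≠ 0 ∧ translateA α v = α

/-- Collinearity of two vectors of `ℤ²`. -/
def Collin (u v : Pos) : Prop := u.1 * v.2 = u.2 * v.1

/-- `α` is bi-periodic: periodic for two non-collinear vectors. -/
def BiPeriodicA (α : Assembly) : Prop :=
  ∃ u v : Pos, ¬ Collin u v ∧ PeriodicA α u ∧ PeriodicA α v

/-- `α` is simply periodic: periodic but not bi-periodic. -/
def SimplyPeriodicA (α : Assembly) : Prop := (∃ v, PeriodicA α v) ∧ ¬ BiPeriodicA α

/-- `α` is aperiodic. -/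
def AperiodicA (α : Assembly) : Prop := ¬ ∃ v, PeriodicA α v

/-- Complexity of an assembly: a finite assembly has complexity 0; for `i ≥ 1` an
assembly has complexity `i` if it is `⋃_{ℓ ∈ ℕ} (β + ℓ v)` for some `β` of
complexity `i - 1`, or a finite union of assemblies of complexity less than `i`. -/
inductive HasComplexity : Assembly → ℕ → Prop
  | finite (α : Assembly) (h : (adom α).Finite) : HasComplexity α 0
  | pump (i : ℕ) (β : Assembly) (v : Pos) (α : Assembly) (hβ : HasComplexity β i)
      (hα : ∀ p t, α p = some t ↔ ∃ ℓ : ℕ, β (p - (ℓ : ℤ) • v) = some t) :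
      HasComplexity α (i + 1)
  | union (i n : ℕ) (f : Fin n → Assembly) (c : Fin n → ℕ) (hc : ∀ k, c k ≤ i)
      (hf : ∀ k, HasComplexity (f k) (c k)) (α : Assembly)
      (hα : ∀ p t, α p = some t ↔ ∃ k, f k p = some t) :
      HasComplexity α (i + 1)

/-! ## Paths -/

/-- A (finite, nonempty) path: a sequence of tiles with pairwise distinct positions
in which each consecutive pair of tiles interacts. -/
def IsPath (P : List Tile) : Prop :=
  P ≠ [] ∧ List.Chain' interact P ∧ (P.map Prod.fst).Nodup

/-- `P` is a path of `α`: `asm(P)` is a subassembly of `α`. -/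
def PathIn (α : Assembly) (P : List Tile) : Prop :=
  IsPath P ∧ ∀ a ∈ P, α a.1 = some a.2

/-- Translation of a tile. -/
def tTile (a : Tile) (w : Pos) : Tile := (a.1 + w, a.2)

/-- Translation of a path. -/
def translatePath (P : List Tile) (w : Pos) : List Tile := P.map (fun a => tTile a w)

/-- The `i`-th tile of a finite path. -/
def nth (P : List Tile) (i : ℕ) : Tile := P.getD i default

/-- The vector `pos(P_{|P|-1}) - pos(P₀)` of a finite path. -/
def pathVec (P : List Tile) : Pos := (nth P (P.length - 1)).1 - (nth P 0).1

/-- `P_{k mod (|P|-1)} + ⌊k / (|P|-1)⌋ • pathVec P`. -/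
def pumpTile (P : List Tile) (k : ℤ) : Tile :=
  tTile (nth P ((k % ((P.length : ℤ) - 1)).toNat)) ((k / ((P.length : ℤ) - 1)) • pathVec P)

/-- The pumping of `P`: an infinite sequence of tiles indexed by `ℕ`. -/
def pump (P : List Tile) (k : ℕ) : Tile := pumpTile P k

/-- The bi-pumping of `P`: a bi-infinite sequence of tiles indexed by `ℤ`. -/
def bipump (P : List Tile) (k : ℤ) : Tile := pumpTile P k

/-- `P` is a good candidate: `type(P₀) = type(P_{|P|-1})` and the only intersection
between `P` and `P + pathVec P` is the agreement of `P₀ + pathVec P` with `P_{|P|-1}`. -/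
def GoodCandidate (P : List Tile) : Prop :=
  2 ≤ P.length ∧ (nth P 0).2 = (nth P (P.length - 1)).2 ∧
  ∀ i j, i < P.length → j < P.length → (nth P i).1 + pathVec P = (nth P j).1 →
    i = 0 ∧ j = P.length - 1

/-- A one-way infinite path. -/
def IsInfPath (Q : ℕ → Tile) : Prop :=
  (∀ k, interact (Q k) (Q (k + 1))) ∧ Function.Injective fun k => (Q k).1

/-- A bi-infinite path. -/
def IsBiPath (Q : ℤ → Tile) : Prop :=
  (∀ k : ℤ, interact (Q k) (Q (k + 1))) ∧ Function.Injective fun k => (Q k).1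

/-- A one-way infinite path of `α`. -/
def InfPathIn (α : Assembly) (Q : ℕ → Tile) : Prop :=
  IsInfPath Q ∧ ∀ k, α (Q k).1 = some (Q k).2

/-- A bi-infinite path of `α`. -/
def BiPathIn (α : Assembly) (Q : ℤ → Tile) : Prop :=
  IsBiPath Q ∧ ∀ k, α (Q k).1 = some (Q k).2

/-- A good candidate `P` is pumpable (with respect to the terminal assembly `α`)
if `pump P ∈ P[α]`. -/
def Pumpable (α : Assembly) (P : List Tile) : Prop :=
  GoodCandidate P ∧ InfPathIn α (pump P)

/-- A good candidate `P` is bi-pumpable if `bipump P ∈ P[α]`. -/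
def BiPumpable (α : Assembly) (P : List Tile) : Prop :=
  GoodCandidate P ∧ BiPathIn α (bipump P)

/-- Simply pumpable: pumpable but not bi-pumpable. -/
def SimplyPumpable (α : Assembly) (P : List Tile) : Prop :=
  Pumpable α P ∧ ¬ BiPumpable α P

/-- A path without redundancy: two tiles share a tile type only if they are the
two extremities. -/
def NoRedundancy (P : List Tile) : Prop :=
  ∀ i j, i < j → j < P.length → (nth P i).2 = (nth P j).2 → i = 0 ∧ j = P.length - 1

/-- The single-tile assembly consisting of the tile `a`. -/
def singleTile (a : Tile) : Assembly := fun p => if p = a.1 then some a.2 else none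

/-- `Q` grows on the infinite path `R` at index `i`: the only intersection of `Q`
with `R` is at `pos(Q₀) = pos(R_i)` and is an agreement. -/
def GrowsOnPump (Q : List Tile) (R : ℕ → Tile) (i : ℕ) : Prop :=
  IsPath Q ∧ nth Q 0 = R i ∧
  ∀ k m, k < Q.length → (nth Q k).1 = (R m).1 → k = 0 ∧ m = i

/-- `Q` is an arc of the infinite path `R` between indices `i ≠ j`: the only
intersections of `Q` with `R` are agreements at its two extremities. -/
def IsArcOfPump (Q : List Tile) (R : ℕ → Tile) (i j : ℕ) : Prop :=
  IsPath Q ∧ i ≠ j ∧ nth Q 0 = R i ∧ nth Q (Q.length - 1) = R j ∧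
  (∀ k m, k < Q.length → (nth Q k).1 = (R m).1 →
    (k = 0 ∧ m = i) ∨ (k = Q.length - 1 ∧ m = j)) ∧
  (Q.length = 2 → j ≠ i + 1 ∧ i ≠ j + 1)

/-- `Q` is `v`-self-avoiding with respect to `α`: `Q` never intersects `Q + ℓ v` for
`ℓ ≥ 1`, and all large enough translations `Q + ℓ v` are paths of `α`. -/
def VSelfAvoiding (α : Assembly) (Q : List Tile) (v : Pos) : Prop :=
  (∀ ℓ : ℕ, 1 ≤ ℓ → ∀ a ∈ Q, ∀ b ∈ Q, a.1 ≠ b.1 + (ℓ : ℤ) • v) ∧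
  ∃ L : ℕ, ∀ ℓ : ℕ, L ≤ ℓ → PathIn α (translatePath Q ((ℓ : ℤ) • v))

/-!
At a common point of `bipump P` and `bipump P + v` the assembly `α` carries a single tile,
so the two tiles meeting there have the same type. As `P` has no redundancy, tiles of
`bipump P` of equal type sit at indices congruent modulo `|P| - 1`, hence differ by a
multiple `ℓ • pathVec P`; this forces `v = ℓ • pathVec P`, and translating `bipump P` by a
multiple of its period only shifts its indices.
-/

@[simp]
lemma length_translatePath (P : List Tile) (v : Pos) : (translatePath P v).length = P.length :=
  List.length_map _

lemma nth_translatePath {P : List Tile} (v : Pos) {i : ℕ} (h : i < P.length) :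
    nth (translatePath P v) i = tTile (nth P i) v := by
  unfold nth translatePath
  rw [List.getD_eq_getElem _ _ (by simpa using h), List.getD_eq_getElem _ _ h, List.getElem_map]

lemma pathVec_translatePath {P : List Tile} (v : Pos) (h : P ≠ []) :
    pathVec (translatePath P v) = pathVec P := by
  have hpos := List.length_pos_iff.mpr h
  rw [pathVec, pathVec, length_translatePath, nth_translatePath v (by omega),
    nth_translatePath v hpos]
  simp only [tTile]
  abel

lemma bipump_translatePath {P : List Tile} (hP : 2 ≤ P.length) (v : Pos) (k : ℤ) :
    bipump (translatePath P v) k = tTile (bipump P k) v := by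
  have hm : (0 : ℤ) < P.length - 1 := by omega
  have hr : (k % ((P.length : ℤ) - 1)).toNat < P.length := by
    have := Int.emod_lt_of_pos k hm
    omega
  rw [bipump, bipump, pumpTile, pumpTile, length_translatePath,
    pathVec_translatePath v (List.ne_nil_of_length_pos (by omega)), nth_translatePath v hr]
  simp only [tTile, add_right_comm]

lemma bipump_add_mul {P : List Tile} (hP : 2 ≤ P.length) (j ℓ : ℤ) :
    bipump P (j + ℓ * (P.length - 1)) = tTile (bipump P j) (ℓ • pathVec P) := by
  have hm : (P.length : ℤ) - 1 ≠ 0 := by omega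
  simp only [bipump, pumpTile, tTile, Int.add_mul_emod_self_right, Int.add_mul_ediv_right _ _ hm,
    add_smul, add_assoc]

lemma NoRedundancy.injOn_snd {P : List Tile} (hP : NoRedundancy P) :
    Set.InjOn (fun i => (nth P i).2) (Set.Iio (P.length - 1)) := by
  intro i hi j hj hij
  simp only [Set.mem_Iio] at hi hj
  rcases lt_trichotomy i j with h | h | h
  · have := hP i j h (by omega) hij
    omega
  · exact h
  · have := hP j i h (by omega) hij.symm
    omega

lemma NoRedundancy.bipump_eq_tTile_of_snd_eq {P : List Tile} (hP : NoRedundancy P)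
    (hlen : 2 ≤ P.length) {k k' : ℤ} (h : (bipump P k).2 = (bipump P k').2) :
    ∃ ℓ : ℤ, bipump P k = tTile (bipump P k') (ℓ • pathVec P) := by
  set m : ℤ := P.length - 1
  have hm : 0 < m := by omega
  have hres : ∀ j : ℤ, (j % m).toNat ∈ Set.Iio (P.length - 1) := fun j => by
    have := Int.emod_lt_of_pos j hm
    simp only [Set.mem_Iio]
    omega
  have hmod : k % m = k' % m := by
    have := hP.injOn_snd (hres k) (hres k') h
    have := Int.emod_nonneg k hm.ne'
    have := Int.emod_nonneg k' hm.ne'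
    omega
  refine ⟨k / m - k' / m, ?_⟩
  rw [← bipump_add_mul hlen]
  congr 1
  change k = k' + (k / m - k' / m) * m
  linear_combination hmod - Int.emod_add_mul_ediv k m + Int.emod_add_mul_ediv k' m

lemma range_bipump_translate_smul_pathVec {P : List Tile} (hP : 2 ≤ P.length) (ℓ : ℤ) :
    Set.range (fun k : ℤ => tTile (bipump P k) (ℓ • pathVec P)) = Set.range (bipump P) := by
  simp_rw [← bipump_add_mul hP]
  exact (add_right_surjective (ℓ * ((P.length : ℤ) - 1))).range_comp (bipump P)

theorem bipump_translate_intersection_general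
    (α : Assembly)
    (P : List Tile) (v : Pos) (hnr : NoRedundancy P)
    (hbp : BiPumpable α P)
    (hbpv : BiPumpable α (translatePath P v))
    (hint : ∃ k k' : ℤ, (bipump P k).1 = (bipump P k').1 + v) :
    (∃ ℓ : ℤ, v = ℓ • pathVec P) ∧
      Set.range (bipump P) = Set.range (fun k : ℤ => tTile (bipump P k) v) := by
  obtain ⟨k, k', hkk⟩ := hint
  have hlen : 2 ≤ P.length := hbp.1.1
  have htype : (bipump P k).2 = (bipump P k').2 := by
    have hk := hbp.2.2 k
    have hk' := hbpv.2.2 k'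
    rw [bipump_translatePath hlen, tTile, ← hkk] at hk'
    exact Option.some.inj (hk.symm.trans hk')
  obtain ⟨ℓ, hℓ⟩ := hnr.bipump_eq_tTile_of_snd_eq hlen htype
  have hv : v = ℓ • pathVec P := by
    have hpos := congrArg Prod.fst hℓ
    rw [hkk] at hpos
    exact add_left_cancel hpos
  exact ⟨⟨ℓ, hv⟩, by rw [hv, range_bipump_translate_smul_pathVec hlen]⟩

/-- Let `P` be a path without redundancy and `v ∈ ℤ²` such that
both `P` and `P + v` are bi-pumpable paths in `P[α]`. If `bipump P` and
`bipump P + v` intersect, then `v = ℓ • (pos(P_{|P|-1}) - pos(P₀))` for some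
`ℓ ∈ ℤ`, and `bipump P = bipump P + v`. -/
theorem bipump_translate_intersection
    (T : Finset TileType) (σ α : Assembly)
    (hseed : SeedOk T σ) (hterm : Terminal T σ α)
    (huniq : ∀ β, Terminal T σ β → β = α)
    (P : List Tile) (v : Pos) (hnr : NoRedundancy P)
    (hP : PathIn α P) (hbp : BiPumpable α P)
    (hPv : PathIn α (translatePath P v)) (hbpv : BiPumpable α (translatePath P v))
    (hint : ∃ k k' : ℤ, (bipump P k).1 = (bipump P k').1 + v) :
    (∃ ℓ : ℤ, v = ℓ • pathVec P) ∧
      Set.range (bipump P) = Set.range (fun k : ℤ => tTile (bipump P k) v) :=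
  bipump_translate_intersection_general α P v hnr hbp hbpv hint
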